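/- Let k be a field and λ ∈ k with λ ≠ 0 and λ ≠ 1. Set z = x − y², z' = x − λy², F = x·z·z' in k[x,y]. Let Q be the 5×5 matrix over k[x,y] obtained from Q_a(2) by deleting its first row and first column, namely the matrix with rows (xz, 0, 0, 0, 0), (0, xz, 0, 0, 0), (0, 0, xz', 0, 0), (−xy, 0, 0, xz', 0), (0, −xy, 0, 0, xz'). Then there exists a 5×5 matrix B over k[x,y] such that Q·B = B·Q = F·I₅; that is, (Q, B) is a matrix factorization of F (corresponding to the word ã₂ ∼ a₂ − c₃). -/

import Mathlib

open MvPolynomial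

noncomputable section

namespace T36

variable {k : Type} [Field k]

/-- `x = X 0` in `k[x,y]`. -/
def x : MvPolynomial (Fin 2) k := X 0
/-- `y = X 1` in `k[x,y]`. -/
def y : MvPolynomial (Fin 2) k := X 1
/-- `z = x - y²`. -/
def z : MvPolynomial (Fin 2) k := x - y ^ 2
/-- `z' = x - λ y²`. -/
def z' (lam : k) : MvPolynomial (Fin 2) k := x - C lam * y ^ 2
/-- `F = x z z'`. -/
def F (lam : k) : MvPolynomial (Fin 2) k := x * z * z' lam

/-- The matrix obtained from `Q_a(2)` by deleting its first row and first column
(corresponding to the word `ã₂ ∼ a₂ − c₃`). -/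
def Qa2del1 (lam : k) : Matrix (Fin 5) (Fin 5) (MvPolynomial (Fin 2) k) :=
  !![x * z, 0, 0, 0, 0;
     0, x * z, 0, 0, 0;
     0, 0, x * z' lam, 0, 0;
     -(x * y), 0, 0, x * z' lam, 0;
     0, -(x * y), 0, 0, x * z' lam]

end T36

/-!
Up to the factor `x`, the matrix is `D - E` with `D` diagonal with entries `z, z, z', z', z'`
and `E` the square-zero matrix with entries `y` at the (1-based) positions `(4,1)` and `(5,2)`.
The diagonal matrix `D'` with entries `z', z', z, z, z` satisfies `D D' = D' D = z z'`, and `E`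
intertwines `D` and `D'` because it only links indices where they carry the same entry. Hence
the square-zero perturbation `(D - E, D' + E)` is still a factorization of `z z'`, and
multiplying the first factor by `x` turns it into a factorization of `F = x z z'`.
-/

theorem sub_mul_add_eq_mul {R : Type*} [Ring R] {a b e : R} (he : e * e = 0)
    (h : a * e = e * b) : (a - e) * (b + e) = a * b := by
  rw [sub_mul, mul_add, mul_add, he, h, add_zero, add_sub_cancel_right]

theorem Matrix.diagonal_mul_single_of_eq {n R : Type*} [Fintype n] [DecidableEq n] [CommRing R]
    {d d' : n → R} {i j : n} (h : d i = d' j) (c : R) :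
    diagonal d * single i j c = single i j c * diagonal d' := by
  ext a b
  rw [diagonal_mul, mul_diagonal, single_apply]
  split_ifs with hab
  · obtain ⟨rfl, rfl⟩ := hab
    rw [h, mul_comm]
  · simp

section MatrixFactorization

variable {n R : Type*} [Fintype n] [DecidableEq n] [CommRing R]

def IsMatrixFactorization (f : R) (A B : Matrix n n R) : Prop :=
  A * B = f • 1 ∧ B * A = f • 1

theorem isMatrixFactorization_diagonal {f : R} {d d' : n → R} (h : ∀ i, d i * d' i = f) :
    IsMatrixFactorization f (Matrix.diagonal d) (Matrix.diagonal d') := by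
  simp only [IsMatrixFactorization, Matrix.diagonal_mul_diagonal, Matrix.smul_one_eq_diagonal,
    h, mul_comm (d' _), and_self]

theorem IsMatrixFactorization.sub_add {f : R} {A B E : Matrix n n R}
    (h : IsMatrixFactorization f A B) (hE : E * E = 0) (hAE : A * E = E * B)
    (hBE : B * E = E * A) : IsMatrixFactorization f (A - E) (B + E) := by
  refine ⟨by rw [sub_mul_add_eq_mul hE hAE, h.1], ?_⟩
  have hBA : B * -E = -E * A := by rw [mul_neg, neg_mul, hBE]
  rw [← sub_neg_eq_add, sub_eq_add_neg A, sub_mul_add_eq_mul (by rw [neg_mul_neg, hE]) hBA, h.2]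

theorem IsMatrixFactorization.smul_left {f : R} {A B : Matrix n n R}
    (h : IsMatrixFactorization f A B) (r : R) : IsMatrixFactorization (r * f) (r • A) B :=
  ⟨by rw [Matrix.smul_mul, h.1, smul_smul], by rw [Matrix.mul_smul, h.2, smul_smul]⟩

end MatrixFactorization

namespace T36

open Matrix

variable {k : Type} [Field k]

def diagQ (lam : k) : Fin 5 → MvPolynomial (Fin 2) k := ![z, z, z' lam, z' lam, z' lam]

def diagB (lam : k) : Fin 5 → MvPolynomial (Fin 2) k := ![z' lam, z' lam, z, z, z]

def offDiag : Matrix (Fin 5) (Fin 5) (MvPolynomial (Fin 2) k) := single 3 0 y + single 4 1 y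

theorem offDiag_mul_self :
    (offDiag * offDiag : Matrix (Fin 5) (Fin 5) (MvPolynomial (Fin 2) k)) = 0 := by
  simp [offDiag, add_mul, mul_add, single_mul_single_of_ne]

theorem diagonal_mul_offDiag {d d' : Fin 5 → MvPolynomial (Fin 2) k} (h₃ : d 3 = d' 0)
    (h₄ : d 4 = d' 1) : diagonal d * offDiag = offDiag * diagonal d' := by
  rw [offDiag, mul_add, add_mul, diagonal_mul_single_of_eq h₃, diagonal_mul_single_of_eq h₄]

theorem isMatrixFactorization_diagQ_diagB (lam : k) :
    IsMatrixFactorization (z * z' lam) (diagonal (diagQ lam)) (diagonal (diagB lam)) :=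
  isMatrixFactorization_diagonal fun i => by fin_cases i <;> simp [diagQ, diagB, mul_comm]

theorem isMatrixFactorization_diagQ_sub_diagB_add (lam : k) :
    IsMatrixFactorization (z * z' lam) (diagonal (diagQ lam) - offDiag)
      (diagonal (diagB lam) + offDiag) :=
  (isMatrixFactorization_diagQ_diagB lam).sub_add offDiag_mul_self
    (diagonal_mul_offDiag rfl rfl) (diagonal_mul_offDiag rfl rfl)

theorem Qa2del1_eq_smul (lam : k) :
    Qa2del1 lam = (x : MvPolynomial (Fin 2) k) • (diagonal (diagQ lam) - offDiag) := by
  ext i j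
  fin_cases i <;> fin_cases j <;> simp [Qa2del1, diagQ, offDiag]

end T36

theorem T36_Qa2_del_first_matrix_factorization_general (k : Type) [Field k] (lam : k) :
    ∃ B : Matrix (Fin 5) (Fin 5) (MvPolynomial (Fin 2) k),
      T36.Qa2del1 lam * B = T36.F lam • (1 : Matrix (Fin 5) (Fin 5) (MvPolynomial (Fin 2) k)) ∧
      B * T36.Qa2del1 lam = T36.F lam • (1 : Matrix (Fin 5) (Fin 5) (MvPolynomial (Fin 2) k)) := by
  have h := (T36.isMatrixFactorization_diagQ_sub_diagB_add lam).smul_left T36.x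
  rw [← T36.Qa2del1_eq_smul, ← mul_assoc] at h
  exact ⟨_, h⟩

theorem T36_Qa2_del_first_matrix_factorization (k : Type) [Field k] (lam : k)
    (h0 : lam ≠ 0) (h1 : lam ≠ 1) :
    ∃ B : Matrix (Fin 5) (Fin 5) (MvPolynomial (Fin 2) k),
      T36.Qa2del1 lam * B = T36.F lam • (1 : Matrix (Fin 5) (Fin 5) (MvPolynomial (Fin 2) k)) ∧
      B * T36.Qa2del1 lam = T36.F lam • (1 : Matrix (Fin 5) (Fin 5) (MvPolynomial (Fin 2) k)) :=
  T36_Qa2_del_first_matrix_factorization_general k lam
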